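/- Let G be a finite multiplicative Lie algebra and H a subalgebra of G. Then H is isoclinic to G if and only if H·𝒵(G) = G. -/

import Mathlib

open scoped commutatorElement

universe u v

/-- A multiplicative Lie algebra: a group with an extra binary operation `⋆`
satisfying the Ellis axioms. -/
class MultLieAlgebra (G : Type u) extends Group G where
  lstar : G → G → G
  lstar_self : ∀ g : G, lstar g g = 1
  lstar_mul_right : ∀ g h h' : G, lstar g (h * h') = lstar g h * (h * lstar g h' * h⁻¹)
  lstar_mul_left : ∀ g g' h : G, lstar (g * g') h = (g * lstar g' h * g⁻¹) * lstar g h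
  lstar_jacobi : ∀ g h k : G,
      lstar (lstar g h) (h * k * h⁻¹) * lstar (lstar h k) (k * g * k⁻¹) *
        lstar (lstar k g) (g * h * g⁻¹) = 1
  conj_lstar : ∀ k g h : G, k * lstar g h * k⁻¹ = lstar (k * g * k⁻¹) (k * h * k⁻¹)

namespace MultLieAlgebra

infixl:72 " ⋆ " => MultLieAlgebra.lstar

variable {G : Type u} [MultLieAlgebra G]

lemma one_lstar (x : G) : (1 : G) ⋆ x = 1 := by
  have h := lstar_mul_left (1 : G) 1 x
  simp only [one_mul, inv_one, mul_one] at h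
  exact (right_eq_mul.mp h)

lemma lstar_one (x : G) : x ⋆ (1 : G) = 1 := by
  have h := lstar_mul_right x (1 : G) 1
  simp only [one_mul, inv_one, mul_one] at h
  exact left_eq_mul.mp h

lemma inv_lstar_of_lstar_eq_one {g : G} (hg : ∀ x : G, g ⋆ x = 1) (y : G) : g⁻¹ ⋆ y = 1 := by
  have h := lstar_mul_left g⁻¹ g y
  simp only [inv_mul_cancel, one_lstar, hg, mul_one, inv_inv] at h
  simpa using h.symm

lemma lstar_inv_of_lstar_eq_one {g : G} (hg : ∀ x : G, x ⋆ g = 1) (y : G) : y ⋆ g⁻¹ = 1 := by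
  have h := lstar_mul_right y g⁻¹ g
  simp only [inv_mul_cancel, lstar_one, hg, mul_one, inv_inv] at h
  simpa using h.symm

/-- The multiplicative commutator ideal `ᴹ[G,G]`, generated by all commutators
`⁅a,b⁆` and all values `a ⋆ b`. -/
def mlCommutator (G : Type u) [MultLieAlgebra G] : Subgroup G :=
  Subgroup.closure {x : G | (∃ a b : G, x = ⁅a, b⁆) ∨ ∃ a b : G, x = a ⋆ b}

lemma commutator_mem_mlCommutator (a b : G) : ⁅a, b⁆ ∈ mlCommutator G :=
  Subgroup.subset_closure (Or.inl ⟨a, b, rfl⟩)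

lemma lstar_mem_mlCommutator (a b : G) : a ⋆ b ∈ mlCommutator G :=
  Subgroup.subset_closure (Or.inr ⟨a, b, rfl⟩)

instance mlCommutator_normal : (mlCommutator G).Normal := by
  constructor
  intro n hn g
  induction hn using Subgroup.closure_induction with
  | mem x hx =>
    rcases hx with ⟨a, b, rfl⟩ | ⟨a, b, rfl⟩
    · have : g * ⁅a, b⁆ * g⁻¹ = ⁅g * a * g⁻¹, g * b * g⁻¹⁆ := by
        simp only [commutatorElement_def]; group
      rw [this]; exact commutator_mem_mlCommutator _ _
    · rw [conj_lstar]; exact lstar_mem_mlCommutator _ _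
  | one => simpa using one_mem (mlCommutator G)
  | mul x y hx hy ihx ihy =>
    have : g * (x * y) * g⁻¹ = (g * x * g⁻¹) * (g * y * g⁻¹) := by group
    rw [this]; exact mul_mem ihx ihy
  | inv x hx ihx =>
    have : g * x⁻¹ * g⁻¹ = (g * x * g⁻¹)⁻¹ := by group
    rw [this]; exact inv_mem ihx

/-- The multiplicative Lie center `𝒵(G) = Z(G) ∩ LZ(G)`. -/
def mlCenter (G : Type u) [MultLieAlgebra G] : Subgroup G where
  carrier := {g : G | (∀ x : G, g * x = x * g) ∧ ∀ x : G, g ⋆ x = 1 ∧ x ⋆ g = 1}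
  one_mem' := ⟨fun x => by simp, fun x => ⟨one_lstar x, lstar_one x⟩⟩
  mul_mem' := by
    rintro a b ⟨ha₁, ha₂⟩ ⟨hb₁, hb₂⟩
    refine ⟨fun x => by rw [mul_assoc, hb₁ x, ← mul_assoc, ha₁ x, mul_assoc], fun x => ?_⟩
    constructor
    · rw [lstar_mul_left, (hb₂ x).1, (ha₂ x).1]; simp
    · rw [lstar_mul_right, (ha₂ x).2, (hb₂ x).2]; simp
  inv_mem' := by
    rintro a ⟨ha₁, ha₂⟩
    refine ⟨fun x => by rw [inv_mul_eq_iff_eq_mul, ← mul_assoc, ha₁ x, mul_assoc,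
      mul_inv_cancel, mul_one], fun x => ?_⟩
    exact ⟨inv_lstar_of_lstar_eq_one (fun y => (ha₂ y).1) x,
      lstar_inv_of_lstar_eq_one (fun y => (ha₂ y).2) x⟩

lemma mem_mlCenter_iff {g : G} :
    g ∈ mlCenter G ↔ (∀ x : G, g * x = x * g) ∧ ∀ x : G, g ⋆ x = 1 ∧ x ⋆ g = 1 :=
  Iff.rfl

instance mlCenter_normal : (mlCenter G).Normal := by
  constructor
  intro n hn g
  have h : g * n * g⁻¹ = n := by rw [← hn.1 g]; group
  rw [h]; exact hn

/-- An isoclinism between two multiplicative Lie algebras. -/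
structure Isoclinism (G : Type u) (H : Type v) [MultLieAlgebra G] [MultLieAlgebra H] where
  lam : (G ⧸ mlCenter G) ≃* (H ⧸ mlCenter H)
  mu : mlCommutator G ≃* mlCommutator H
  map_commutator : ∀ (g g' : G) (h h' : H),
    lam (QuotientGroup.mk g) = QuotientGroup.mk h →
    lam (QuotientGroup.mk g') = QuotientGroup.mk h' →
    (mu ⟨⁅g, g'⁆, commutator_mem_mlCommutator g g'⟩ : H) = ⁅h, h'⁆
  map_lstar : ∀ (g g' : G) (h h' : H),
    lam (QuotientGroup.mk g) = QuotientGroup.mk h →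
    lam (QuotientGroup.mk g') = QuotientGroup.mk h' →
    (mu ⟨g ⋆ g', lstar_mem_mlCommutator g g'⟩ : H) = h ⋆ h'

/-- Two multiplicative Lie algebras are isoclinic if there is an isoclinism between them. -/
def Isoclinic (G : Type u) (H : Type v) [MultLieAlgebra G] [MultLieAlgebra H] : Prop :=
  Nonempty (Isoclinism G H)

/-- Componentwise multiplicative Lie algebra structure on a binary product. -/
instance instProd (G : Type u) (H : Type v) [MultLieAlgebra G] [MultLieAlgebra H] :
    MultLieAlgebra (G × H) where
  lstar a b := (a.1 ⋆ b.1, a.2 ⋆ b.2)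
  lstar_self a := by ext <;> simp [lstar_self]
  lstar_mul_right a b c := by ext <;> simp [lstar_mul_right]
  lstar_mul_left a b c := by ext <;> simp [lstar_mul_left]
  lstar_jacobi a b c := by ext <;> simp [lstar_jacobi]
  conj_lstar k a b := by ext <;> simp [← conj_lstar]

/-- Componentwise multiplicative Lie algebra structure on a Pi type. -/
instance instPi {ι : Type v} (f : ι → Type u) [∀ i, MultLieAlgebra (f i)] :
    MultLieAlgebra (∀ i, f i) where
  lstar a b := fun i => a i ⋆ b i
  lstar_self a := by funext i; simp [lstar_self]
  lstar_mul_right a b c := by funext i; simp [lstar_mul_right]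
  lstar_mul_left a b c := by funext i; simp [lstar_mul_left]
  lstar_jacobi a b c := by funext i; simp [lstar_jacobi]
  conj_lstar k a b := by funext i; simp [← conj_lstar]

/-- The trivial multiplicative Lie algebra structure on the one-element group. -/
instance instPUnit : MultLieAlgebra PUnit.{u+1} where
  lstar _ _ := 1
  lstar_self _ := rfl
  lstar_mul_right _ _ _ := rfl
  lstar_mul_left _ _ _ := rfl
  lstar_jacobi _ _ _ := rfl
  conj_lstar _ _ _ := rfl

/-- A subalgebra of a multiplicative Lie algebra: a subgroup closed under `⋆`. -/
structure MLSubalgebra (G : Type u) [MultLieAlgebra G] extends Subgroup G where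
  lstar_mem' : ∀ {a b : G}, a ∈ carrier → b ∈ carrier → a ⋆ b ∈ carrier

/-- A subalgebra is a multiplicative Lie algebra with the restricted operations. -/
instance instSubalgebra (H : MLSubalgebra G) : MultLieAlgebra H.toSubgroup where
  lstar a b := ⟨(a : G) ⋆ (b : G), H.lstar_mem' a.2 b.2⟩
  lstar_self a := Subtype.ext (lstar_self (a : G))
  lstar_mul_right a b c := Subtype.ext (lstar_mul_right (a : G) b c)
  lstar_mul_left a b c := Subtype.ext (lstar_mul_left (a : G) b c)
  lstar_jacobi a b c := Subtype.ext (lstar_jacobi (a : G) b c)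
  conj_lstar k a b := Subtype.ext (conj_lstar (k : G) a b)

lemma mul_center_lstar {z : G} (hz : z ∈ mlCenter G) (g y : G) : (g * z) ⋆ y = g ⋆ y := by
  rw [lstar_mul_left, (hz.2 y).1]
  simp

lemma lstar_mul_center {z : G} (hz : z ∈ mlCenter G) (g y : G) : y ⋆ (g * z) = y ⋆ g := by
  rw [lstar_mul_right, (hz.2 y).2]
  simp

/-- The subalgebra `H·𝒵(G)` generated by a subalgebra `H` and the multiplicative
Lie center of `G`. -/
def MLSubalgebra.centerJoin (H : MLSubalgebra G) : MLSubalgebra G where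
  carrier := {x : G | ∃ h ∈ H.carrier, ∃ z ∈ mlCenter G, x = h * z}
  one_mem' := ⟨1, H.toSubgroup.one_mem, 1, one_mem _, by simp⟩
  mul_mem' := by
    rintro x y ⟨h, hh, z, hz, rfl⟩ ⟨h', hh', z', hz', rfl⟩
    refine ⟨h * h', H.toSubgroup.mul_mem hh hh', z * z', mul_mem hz hz', ?_⟩
    rw [mul_assoc, ← mul_assoc z h' z', hz.1 h', mul_assoc, ← mul_assoc, ← mul_assoc]
  inv_mem' := by
    rintro x ⟨h, hh, z, hz, rfl⟩
    refine ⟨h⁻¹, H.toSubgroup.inv_mem hh, z⁻¹, inv_mem hz, ?_⟩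
    rw [mul_inv_rev, (inv_mem hz).1 h⁻¹]
  lstar_mem' := by
    rintro x y ⟨h, hh, z, hz, rfl⟩ ⟨h', hh', z', hz', rfl⟩
    exact ⟨h ⋆ h', H.lstar_mem' hh hh', 1, one_mem _, by
      rw [mul_center_lstar hz, lstar_mul_center hz', mul_one]⟩

/-- An ideal of a multiplicative Lie algebra: a normal subgroup `I` with
`g ⋆ i ∈ I` and `i ⋆ g ∈ I` for all `g ∈ G`, `i ∈ I`. -/
structure MLIdeal (G : Type u) [MultLieAlgebra G] extends Subgroup G where
  conj_mem' : ∀ n : G, n ∈ carrier → ∀ g : G, g * n * g⁻¹ ∈ carrier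
  lstar_mem_left' : ∀ (g : G) {i : G}, i ∈ carrier → g ⋆ i ∈ carrier
  lstar_mem_right' : ∀ (g : G) {i : G}, i ∈ carrier → i ⋆ g ∈ carrier

instance MLIdeal.normal (I : MLIdeal G) : I.toSubgroup.Normal := ⟨I.conj_mem'⟩

/-- An ideal is in particular a subalgebra. -/
def MLIdeal.toMLSubalgebra (I : MLIdeal G) : MLSubalgebra G :=
  { I.toSubgroup with lstar_mem' := fun {a _} _ hb => I.lstar_mem_left' a hb }

lemma MLIdeal.lstar_congr (I : MLIdeal G) {a a' b b' : G}
    (ha : a⁻¹ * a' ∈ I.toSubgroup) (hb : b⁻¹ * b' ∈ I.toSubgroup) :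
    (a ⋆ b)⁻¹ * (a' ⋆ b') ∈ I.toSubgroup := by
  obtain ⟨i, hi, rfl⟩ : ∃ i ∈ I.toSubgroup, a' = a * i :=
    ⟨a⁻¹ * a', ha, by group⟩
  obtain ⟨j, hj, rfl⟩ : ∃ j ∈ I.toSubgroup, b' = b * j :=
    ⟨b⁻¹ * b', hb, by group⟩
  have h1 : (a * i) ⋆ (b * j) = (a * (i ⋆ (b * j)) * a⁻¹) * (a ⋆ (b * j)) :=
    lstar_mul_left a i (b * j)
  have h2 : a ⋆ (b * j) = (a ⋆ b) * (b * (a ⋆ j) * b⁻¹) := lstar_mul_right a b j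
  rw [h1, h2]
  have hu : a * (i ⋆ (b * j)) * a⁻¹ ∈ I.toSubgroup :=
    I.conj_mem' _ (I.lstar_mem_right' _ hi) a
  have hv : b * (a ⋆ j) * b⁻¹ ∈ I.toSubgroup :=
    I.conj_mem' _ (I.lstar_mem_left' _ hj) b
  have : (a ⋆ b)⁻¹ * (a * (i ⋆ (b * j)) * a⁻¹ * ((a ⋆ b) * (b * (a ⋆ j) * b⁻¹))) =
      ((a ⋆ b)⁻¹ * (a * (i ⋆ (b * j)) * a⁻¹) * (a ⋆ b)) * (b * (a ⋆ j) * b⁻¹) := by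
    group
  rw [this]
  exact mul_mem (Subgroup.Normal.conj_mem' I.normal _ hu _) hv

/-- The quotient of a multiplicative Lie algebra by an ideal. -/
instance instQuotient (I : MLIdeal G) : MultLieAlgebra (G ⧸ I.toSubgroup) where
  lstar := Quotient.map₂ (· ⋆ ·) (by
    intro a a' ha b b' hb
    have ha' : a⁻¹ * a' ∈ I.toSubgroup := QuotientGroup.leftRel_apply.mp ha
    have hb' : b⁻¹ * b' ∈ I.toSubgroup := QuotientGroup.leftRel_apply.mp hb
    exact QuotientGroup.leftRel_apply.mpr (I.lstar_congr ha' hb'))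
  lstar_self x := Quotient.inductionOn x fun a => congrArg QuotientGroup.mk (lstar_self a)
  lstar_mul_right x y z := Quotient.inductionOn₃ x y z fun a b c =>
    congrArg QuotientGroup.mk (lstar_mul_right a b c)
  lstar_mul_left x y z := Quotient.inductionOn₃ x y z fun a b c =>
    congrArg QuotientGroup.mk (lstar_mul_left a b c)
  lstar_jacobi x y z := Quotient.inductionOn₃ x y z fun a b c =>
    congrArg QuotientGroup.mk (lstar_jacobi a b c)
  conj_lstar x y z := Quotient.inductionOn₃ x y z fun a b c =>
    congrArg QuotientGroup.mk (conj_lstar a b c)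

lemma quot_lstar (I : MLIdeal G) (a b : G) :
    (QuotientGroup.mk (a ⋆ b) : G ⧸ I.toSubgroup) = QuotientGroup.mk a ⋆ QuotientGroup.mk b :=
  rfl

/-- The ideal `I ∩ ᴹ[G,G]`. -/
def MLIdeal.infCommutator (I : MLIdeal G) : MLIdeal G where
  carrier := {x : G | x ∈ I.toSubgroup ∧ x ∈ mlCommutator G}
  one_mem' := ⟨one_mem _, one_mem _⟩
  mul_mem' := fun ha hb => ⟨mul_mem ha.1 hb.1, mul_mem ha.2 hb.2⟩
  inv_mem' := fun ha => ⟨inv_mem ha.1, inv_mem ha.2⟩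
  conj_mem' := fun n hn g =>
    ⟨I.conj_mem' n hn.1 g, Subgroup.Normal.conj_mem mlCommutator_normal n hn.2 g⟩
  lstar_mem_left' := by
    intro g i hi
    exact ⟨I.lstar_mem_left' g hi.1, lstar_mem_mlCommutator _ _⟩
  lstar_mem_right' := by
    intro g i hi
    exact ⟨I.lstar_mem_right' g hi.1, lstar_mem_mlCommutator _ _⟩

/-- A multiplicative Lie algebra isomorphism is a group isomorphism preserving `⋆`. -/
def IsMLAEquiv {G : Type u} {H : Type v} [MultLieAlgebra G] [MultLieAlgebra H]
    (e : G ≃* H) : Prop :=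
  ∀ a b : G, e (a ⋆ b) = e a ⋆ e b

/-- A witness that `G` and `H` arise as quotients of a common multiplicative Lie
algebra `K` by ideals `ZG`, `ZH`, with `G ∼ K ∼ H` (Theorem on common ancestors). -/
structure CommonQuotientWitness (G : Type u) (H : Type u)
    [MultLieAlgebra G] [MultLieAlgebra H] where
  K : Type u
  [instK : MultLieAlgebra K]
  ZG : MLIdeal K
  ZH : MLIdeal K
  isoG : G ≃* (K ⧸ ZH.toSubgroup)
  isoG_lstar : IsMLAEquiv isoG
  isoH : H ≃* (K ⧸ ZG.toSubgroup)
  isoH_lstar : IsMLAEquiv isoH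
  isoclinicGK : Isoclinic G K
  isoclinicKH : Isoclinic K H

/-- A witness that `G` and `H` embed as ideals of a common multiplicative Lie algebra
`K̃`, each isoclinic to `K̃` (common isoclinic descendant). -/
structure CommonIdealWitness (G : Type u) (H : Type u)
    [MultLieAlgebra G] [MultLieAlgebra H] where
  K : Type u
  [instK : MultLieAlgebra K]
  KG : MLIdeal K
  KH : MLIdeal K
  isoG : G ≃* KG.toMLSubalgebra.toSubgroup
  isoG_lstar : IsMLAEquiv isoG
  isoH : H ≃* KH.toMLSubalgebra.toSubgroup
  isoH_lstar : IsMLAEquiv isoH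
  isoclinicG : Isoclinic (KG.toMLSubalgebra.toSubgroup) K
  isoclinicH : Isoclinic (KH.toMLSubalgebra.toSubgroup) K

/-- A witness of a stem multiplicative Lie algebra isoclinic to `G`. -/
structure StemWitness (G : Type u) [MultLieAlgebra G] where
  H : Type u
  [instH : MultLieAlgebra H]
  stem : mlCenter H ≤ mlCommutator H
  isoclinic : Isoclinic G H


/-! The map `H → G/𝒵(G)` has kernel `H ∩ 𝒵(G) ≤ 𝒵(H)`, and `H·𝒵(G) = G` says exactly that it is
onto. Since commutators and `⋆` only depend on classes modulo `𝒵(G)`, surjectivity forces the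
kernel to be all of `𝒵(H)` and `ᴹ[H,H] = ᴹ[G,G]`; the induced `H/𝒵(H) ≃ G/𝒵(G)` together with the
identity of `ᴹ[G,G]` is an isoclinism. Conversely, an isoclinism gives
`|G/𝒵(G)| = |H/𝒵(H)| ≤ |H/ker| = |image|`, so for finite `G` the map is onto. -/

lemma commutator_mul_center_left {z : G} (hz : z ∈ mlCenter G) (a b : G) :
    ⁅a * z, b⁆ = ⁅a, b⁆ := by
  have hzb : z * b * z⁻¹ = b := by rw [hz.1 b]; group
  calc ⁅a * z, b⁆ = a * (z * b * z⁻¹) * a⁻¹ * b⁻¹ := by rw [commutatorElement_def]; group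
    _ = ⁅a, b⁆ := by rw [hzb, commutatorElement_def]

lemma commutator_mul_center_right {z : G} (hz : z ∈ mlCenter G) (a b : G) :
    ⁅a, b * z⁆ = ⁅a, b⁆ := by
  rw [← inv_inj, commutatorElement_inv, commutatorElement_inv, commutator_mul_center_left hz]

lemma commutator_eq_of_mk_eq {a a' b b' : G} (ha : (a : G ⧸ mlCenter G) = a')
    (hb : (b : G ⧸ mlCenter G) = b') : ⁅a, b⁆ = ⁅a', b'⁆ := by
  obtain ⟨z, hz, rfl⟩ : ∃ z ∈ mlCenter G, a' = a * z := ⟨_, QuotientGroup.eq.mp ha, by group⟩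
  obtain ⟨z', hz', rfl⟩ : ∃ z ∈ mlCenter G, b' = b * z := ⟨_, QuotientGroup.eq.mp hb, by group⟩
  rw [commutator_mul_center_left hz, commutator_mul_center_right hz']

lemma lstar_eq_of_mk_eq {a a' b b' : G} (ha : (a : G ⧸ mlCenter G) = a')
    (hb : (b : G ⧸ mlCenter G) = b') : a ⋆ b = a' ⋆ b' := by
  obtain ⟨z, hz, rfl⟩ : ∃ z ∈ mlCenter G, a' = a * z := ⟨_, QuotientGroup.eq.mp ha, by group⟩
  obtain ⟨z', hz', rfl⟩ : ∃ z ∈ mlCenter G, b' = b * z := ⟨_, QuotientGroup.eq.mp hb, by group⟩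
  rw [mul_center_lstar hz, lstar_mul_center hz']

namespace MLSubalgebra

variable (H : MLSubalgebra G)

def toCenterQuotient : H.toSubgroup →* G ⧸ mlCenter G :=
  (QuotientGroup.mk' _).comp H.toSubgroup.subtype

lemma mem_centerJoin_iff {g : G} :
    g ∈ H.centerJoin.toSubgroup ↔ ∃ h : H.toSubgroup, H.toCenterQuotient h = g := by
  constructor
  · rintro ⟨h, hh, z, hz, rfl⟩
    exact ⟨⟨h, hh⟩, QuotientGroup.eq.mpr (by simpa using hz)⟩
  · rintro ⟨h, hhg⟩
    exact ⟨h, h.2, _, QuotientGroup.eq.mp hhg, (mul_inv_cancel_left _ _).symm⟩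

lemma centerJoin_eq_top_iff_surjective :
    H.centerJoin.toSubgroup = ⊤ ↔ Function.Surjective H.toCenterQuotient := by
  simp only [Subgroup.eq_top_iff', mem_centerJoin_iff]
  exact ⟨fun h q => QuotientGroup.induction_on q h, fun h g => h g⟩

lemma ker_toCenterQuotient_le : H.toCenterQuotient.ker ≤ mlCenter H.toSubgroup := by
  intro x hx
  have hx : (x : G) ∈ mlCenter G := (QuotientGroup.eq_one_iff _).mp hx
  exact ⟨fun y => Subtype.ext (hx.1 y), fun y => ⟨Subtype.ext (hx.2 y).1, Subtype.ext (hx.2 y).2⟩⟩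

lemma ker_toCenterQuotient_eq (hH : Function.Surjective H.toCenterQuotient) :
    H.toCenterQuotient.ker = mlCenter H.toSubgroup := by
  refine le_antisymm H.ker_toCenterQuotient_le fun x hx => (QuotientGroup.eq_one_iff _).mpr ?_
  refine ⟨fun g => ?_, fun g => ?_⟩
  all_goals obtain ⟨h, hhg⟩ := hH g
  · rw [← commutatorElement_eq_one_iff_mul_comm, commutator_eq_of_mk_eq rfl hhg.symm,
      commutatorElement_eq_one_iff_mul_comm]
    exact congrArg Subtype.val (hx.1 h)
  · rw [lstar_eq_of_mk_eq rfl hhg.symm, lstar_eq_of_mk_eq hhg.symm rfl]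
    exact ⟨congrArg Subtype.val (hx.2 h).1, congrArg Subtype.val (hx.2 h).2⟩

lemma map_mlCommutator_eq (hH : Function.Surjective H.toCenterQuotient) :
    (mlCommutator H.toSubgroup).map H.toSubgroup.subtype = mlCommutator G := by
  rw [mlCommutator, mlCommutator, MonoidHom.map_closure]
  congr 1
  ext x
  constructor
  · rintro ⟨y, ⟨a, b, rfl⟩ | ⟨a, b, rfl⟩, rfl⟩
    exacts [Or.inl ⟨a, b, rfl⟩, Or.inr ⟨a, b, rfl⟩]
  · rintro (⟨a, b, rfl⟩ | ⟨a, b, rfl⟩)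
    all_goals obtain ⟨a', ha⟩ := hH a; obtain ⟨b', hb⟩ := hH b
    · exact ⟨⁅a', b'⁆, Or.inl ⟨a', b', rfl⟩, commutator_eq_of_mk_eq ha hb⟩
    · exact ⟨a' ⋆ b', Or.inr ⟨a', b', rfl⟩, lstar_eq_of_mk_eq ha hb⟩

noncomputable def isoclinismOfSurjective (hH : Function.Surjective H.toCenterQuotient) :
    Isoclinism H.toSubgroup G where
  lam := QuotientGroup.liftEquiv _ hH (H.ker_toCenterQuotient_eq hH).symm
  mu := (Subgroup.equivMapOfInjective _ _ H.toSubgroup.subtype_injective).trans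
    (MulEquiv.subgroupCongr (H.map_mlCommutator_eq hH))
  map_commutator _ _ _ _ := commutator_eq_of_mk_eq
  map_lstar _ _ _ _ := lstar_eq_of_mk_eq

lemma toCenterQuotient_surjective_of_card_le [Finite G]
    (hcard : Nat.card (G ⧸ mlCenter G) ≤ Nat.card (H.toSubgroup ⧸ mlCenter H.toSubgroup)) :
    Function.Surjective H.toCenterQuotient := by
  rw [← MonoidHom.range_eq_top]
  refine Subgroup.eq_top_of_le_card _ ?_
  calc Nat.card (G ⧸ mlCenter G) ≤ (mlCenter H.toSubgroup).index := by
        rwa [Subgroup.index_eq_card]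
    _ ≤ H.toCenterQuotient.ker.index := Subgroup.index_antitone H.ker_toCenterQuotient_le
    _ = Nat.card H.toCenterQuotient.range := Subgroup.index_ker _

end MLSubalgebra

/-- For a finite multiplicative Lie algebra `G` and a subalgebra `H`,
`H ∼ G` iff `H·𝒵(G) = G`. -/
theorem isoclinic_iff_centerJoin_eq_top {G : Type u} [MultLieAlgebra G] [Finite G]
    (H : MLSubalgebra G) :
    Isoclinic ↥H.toSubgroup G ↔ H.centerJoin.toSubgroup = ⊤ := by
  rw [H.centerJoin_eq_top_iff_surjective]
  exact ⟨fun ⟨e⟩ => H.toCenterQuotient_surjective_of_card_le (Nat.card_congr e.lam.toEquiv).ge,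
    fun hH => ⟨H.isoclinismOfSurjective hH⟩⟩

end MultLieAlgebra
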